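/- arXiv:2112.09885 — 6 statements merged into one kernel-verified Lean document; each statement's English description precedes it below -/
import Mathlib

section
/- For any partition λ and any integer i with 1 ≤ i ≤ ℓ(λ), one has the identity (1-q)·Σ_{j=1}^{λ_i} q^{-j} t^{λ'_j} = Σ_{j=i}^{ℓ(λ)} q^{-λ_j} t^{j} (1 - q^{λ_j - λ_{j+1}}), as Laurent polynomials in q and t, where λ_{ℓ(λ)+1} = 0. -/
open Finset

/-- Conjugate partition: `conj ℓ lam j = #{i < ℓ : lam i ≥ j}` (0-indexed rows). -/
def conjPart (ℓ : ℕ) (lam : ℕ → ℕ) (j : ℕ) : ℕ :=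
  ((Finset.range ℓ).filter (fun i => j ≤ lam i)).card

/-! The columns `j` with `λ_{k+1} < j ≤ λ_k` are exactly those of height `λ'_j = k`. Cutting
`1 ≤ j ≤ λ_i` into these stretches for `k = i, …, ℓ`, the left-hand side becomes
`Σ_k t^k (1 - q) Σ_{λ_{k+1} < j ≤ λ_k} q^{-j}`, and each inner geometric sum telescopes to
`q^{-λ_k} (1 - q^{λ_k - λ_{k+1}})`. -/

theorem Finset.sum_Ioc_eq_sum_sum_Ioc_of_antitone {M : Type*} [AddCommMonoid M] (f : ℕ → M)
    {a : ℕ → ℕ} (ha : Antitone a) {m n : ℕ} (hmn : m ≤ n) :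
    ∑ j ∈ Ioc (a n) (a m), f j = ∑ k ∈ Ioc m n, ∑ j ∈ Ioc (a k) (a (k - 1)), f j := by
  induction n, hmn using Nat.le_induction with
  | base => simp
  | succ n hmn ih =>
    rw [sum_Ioc_succ_top hmn, ← ih, Nat.add_sub_cancel,
      ← sum_Ioc_consecutive f (ha n.le_succ) (ha hmn), add_comm]

theorem one_sub_mul_sum_Ioc_zpow_neg {F : Type*} [Field F] {q : F} (hq : q ≠ 0) {a b : ℕ}
    (hab : a ≤ b) :
    (1 - q) * ∑ j ∈ Ioc a b, q ^ (-(j : ℤ)) = q ^ (-(b : ℤ)) * (1 - q ^ (b - a)) := by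
  induction b, hab using Nat.le_induction with
  | base => simp
  | succ b hab ih =>
    have hshift : q ^ (-(b : ℤ)) = q * q ^ (-((b + 1 : ℕ) : ℤ)) := by
      rw [← zpow_one_add₀ hq]; push_cast; ring_nf
    rw [sum_Ioc_succ_top hab, mul_add, ih, hshift, Nat.sub_add_comm hab, pow_succ]
    ring

theorem conjPart_eq_of_mem_Ioc {ℓ : ℕ} {lam : ℕ → ℕ} (ha : Antitone lam) {k j : ℕ} (hk : k ≤ ℓ)
    (hj : j ∈ Ioc (lam k) (lam (k - 1))) : conjPart ℓ lam j = k := by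
  rw [mem_Ioc] at hj
  suffices (range ℓ).filter (fun m => j ≤ lam m) = range k by rw [conjPart, this, card_range]
  ext m
  simp only [mem_filter, mem_range]
  constructor
  · rintro ⟨-, hjm⟩
    by_contra! hkm
    exact (hjm.trans (ha hkm)).not_gt hj.1
  · intro hmk
    exact ⟨hmk.trans_le hk, hj.2.trans (ha (Nat.le_sub_one_of_lt hmk))⟩

theorem one_sub_mul_sum_Ioc_conjPart {F : Type*} [Field F] {q : F} (hq : q ≠ 0) (t : F)
    {ℓ : ℕ} {lam : ℕ → ℕ} (ha : Antitone lam) {k : ℕ} (hk : k ≤ ℓ) :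
    (1 - q) * ∑ j ∈ Ioc (lam k) (lam (k - 1)), q ^ (-(j : ℤ)) * t ^ conjPart ℓ lam j
      = q ^ (-(lam (k - 1) : ℤ)) * t ^ k * (1 - q ^ (lam (k - 1) - lam k)) := by
  rw [sum_congr rfl fun j hj => by rw [conjPart_eq_of_mem_Ioc ha hk hj], ← sum_mul,
    ← mul_assoc, one_sub_mul_sum_Ioc_zpow_neg hq (ha (Nat.sub_le k 1))]
  ring

/-- Rows are 0-indexed (`λ_k = lam (k-1)`, `λ_{ℓ+1} = lam ℓ = 0`); Laurent polynomials in `q, t`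
are modelled by elements of a field with `q ≠ 0`. -/
theorem macdonald_column_formula_general {F : Type*} [Field F] (q t : F) (hq : q ≠ 0)
    (ℓ : ℕ) (lam : ℕ → ℕ)
    (hanti : ∀ k, lam (k + 1) ≤ lam k)
    (hlen : ∀ k, ℓ ≤ k → lam k = 0)
    (i : ℕ) (hi1 : 1 ≤ i) (hi2 : i ≤ ℓ) :
    (1 - q) * ∑ j ∈ Finset.Icc 1 (lam (i - 1)),
        q ^ (-(j : ℤ)) * t ^ (conjPart ℓ lam j)
      = ∑ j ∈ Finset.Icc i ℓ,
          q ^ (-(lam (j - 1) : ℤ)) * t ^ j * (1 - q ^ (lam (j - 1) - lam j)) := by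
  have ha : Antitone lam := antitone_nat_of_succ_le hanti
  have hIcc : Icc i ℓ = Ioc (i - 1) ℓ := by
    rw [← Icc_add_one_left_eq_Ioc, Nat.sub_add_cancel hi1]
  calc (1 - q) * ∑ j ∈ Icc 1 (lam (i - 1)), q ^ (-(j : ℤ)) * t ^ conjPart ℓ lam j
      = (1 - q) * ∑ j ∈ Ioc (lam ℓ) (lam (i - 1)), q ^ (-(j : ℤ)) * t ^ conjPart ℓ lam j := by
        rw [hlen ℓ le_rfl, ← Icc_add_one_left_eq_Ioc, zero_add]
    _ = ∑ k ∈ Ioc (i - 1) ℓ, (1 - q) *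
          ∑ j ∈ Ioc (lam k) (lam (k - 1)), q ^ (-(j : ℤ)) * t ^ conjPart ℓ lam j := by
        rw [sum_Ioc_eq_sum_sum_Ioc_of_antitone _ ha (by omega), mul_sum]
    _ = _ := by
        rw [hIcc]
        exact sum_congr rfl fun k hk => one_sub_mul_sum_Ioc_conjPart hq t ha (mem_Ioc.1 hk).2

/-- For a partition `λ` of length `ℓ` (0-indexed: `λ_k = lam (k-1)`, `λ_{ℓ+1} = 0`) and
`1 ≤ i ≤ ℓ`:
`(1-q)·Σ_{j=1}^{λ_i} q^{-j} t^{λ'_j} = Σ_{j=i}^{ℓ} q^{-λ_j} t^{j} (1 - q^{λ_j - λ_{j+1}})`,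
as Laurent polynomials in `q, t` (formalized in a field with `q ≠ 0`). -/
theorem macdonald_column_formula {F : Type*} [Field F] (q t : F) (hq : q ≠ 0)
    (ℓ : ℕ) (lam : ℕ → ℕ)
    (hanti : ∀ k, lam (k + 1) ≤ lam k)
    (hlen : ∀ k, ℓ ≤ k → lam k = 0)
    (hpos : ∀ k, k < ℓ → 0 < lam k)
    (i : ℕ) (hi1 : 1 ≤ i) (hi2 : i ≤ ℓ) :
    (1 - q) * ∑ j ∈ Finset.Icc 1 (lam (i - 1)),
        q ^ (-(j : ℤ)) * t ^ (conjPart ℓ lam j)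
      = ∑ j ∈ Finset.Icc i ℓ,
          q ^ (-(lam (j - 1) : ℤ)) * t ^ j * (1 - q ^ (lam (j - 1) - lam j)) :=
  macdonald_column_formula_general q t hq ℓ lam hanti hlen i hi1 hi2
end

section
/- Let λ be a partition. Define for a nonzero integer m the quantity E_{λ,m} = 1/(1-t^m) + Σ_{j=1}^{ℓ(λ)} (q^{-m λ_j} - 1) t^{m(j-1)}, an element of the field of rational functions in q^m, t^m. Then E_{λ,m} = (1/(1-t^m)) · ( Σ_{□∈A(λ)} q^{m·c(□)} − (t/q)^m Σ_{■∈R(λ)} q^{m·c(■)} ), where for a cell (i,j) we write q^{m·c((i,j))} = t^{m(i-1)} q^{-m(j-1)}, A(λ) is the set of addable cells of λ, and R(λ) is the set of removable cells of λ. -/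
open Finset

/-- `E_{λ,m} = 1/(1-t^m) + Σ_{j=1}^{ℓ(λ)} (q^{-m λ_j} - 1) t^{m(j-1)}` (0-indexed rows). -/
noncomputable def Eqt {F : Type*} [Field F] (q t : F) (m : ℤ) (ℓ : ℕ) (lam : ℕ → ℕ) : F :=
  (1 - t ^ m)⁻¹ + ∑ j ∈ Finset.range ℓ, (q ^ (-(m * (lam j : ℤ))) - 1) * t ^ (m * (j : ℤ))

/-! With `T = t^m` and `Q = q^{-m}` the cell weight `t^{m i} q^{-m λ_i}` of the addable cell in
row `i` becomes `T^i Q^{λ_i}`, and `(t/q)^m` times the weight of the removable cell in row `i` is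
`T^{i+1} Q^{λ_i}`. Rows that are not removable (`λ_{i+1} = λ_i`) are matched with rows `i + 1`
that are not addable and carry the same weight, so the difference of the two cell sums equals the
difference of the full sums over all rows; that difference telescopes against the geometric sum
`(1 - T) ∑_{i<ℓ} T^i = 1 - T^ℓ`. -/

section Cells

variable {M : Type*} [AddCommGroup M] {lam : ℕ → ℕ}

theorem sum_nonremovable_eq_sum_nonaddable (hanti : ∀ k, lam (k + 1) ≤ lam k) (ℓ : ℕ)
    (a : ℕ → ℕ → M) :
    ∑ i ∈ (range ℓ).filter (fun i => ¬ lam (i + 1) < lam i), a (i + 1) (lam i)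
      = ∑ i ∈ (range (ℓ + 1)).filter (fun i => ¬ (i = 0 ∨ lam i < lam (i - 1))), a i (lam i) := by
  refine sum_nbij' (· + 1) (· - 1) ?_ ?_ ?_ ?_ ?_
  · intro i hi
    simp only [mem_filter, mem_range] at hi ⊢
    simpa using hi
  · intro i hi
    simp only [mem_filter, mem_range, not_or] at hi ⊢
    obtain ⟨hiℓ, hi0, hi⟩ := hi
    obtain ⟨j, rfl⟩ := Nat.exists_eq_add_one_of_ne_zero hi0
    exact ⟨by omega, by simpa using hi⟩
  · intro i _
    simp
  · intro i hi
    simp only [mem_filter, not_or] at hi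
    exact Nat.sub_add_cancel (Nat.one_le_iff_ne_zero.mpr hi.2.1)
  · intro i hi
    simp only [mem_filter, not_lt] at hi
    rw [le_antisymm (hanti i) hi.2]

theorem sum_addable_sub_sum_removable (hanti : ∀ k, lam (k + 1) ≤ lam k) (ℓ : ℕ)
    (a : ℕ → ℕ → M) :
    ∑ i ∈ (range (ℓ + 1)).filter (fun i => i = 0 ∨ lam i < lam (i - 1)), a i (lam i)
        - ∑ i ∈ (range ℓ).filter (fun i => lam (i + 1) < lam i), a (i + 1) (lam i)
      = ∑ i ∈ range (ℓ + 1), a i (lam i) - ∑ i ∈ range ℓ, a (i + 1) (lam i) := by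
  rw [← sum_filter_add_sum_filter_not (range (ℓ + 1)) (fun i => i = 0 ∨ lam i < lam (i - 1)),
    ← sum_filter_add_sum_filter_not (range ℓ) (fun i => lam (i + 1) < lam i),
    sum_nonremovable_eq_sum_nonaddable hanti]
  abel

end Cells

theorem inv_one_sub_add_sum_eq_addable_sub_removable {K : Type*} [Field K] (T Q : K)
    (hT : T ≠ 1) {lam : ℕ → ℕ} (hanti : ∀ k, lam (k + 1) ≤ lam k) (ℓ : ℕ) (hℓ : lam ℓ = 0) :
    (1 - T)⁻¹ + ∑ i ∈ range ℓ, (Q ^ lam i - 1) * T ^ i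
      = (1 - T)⁻¹ *
        (∑ i ∈ (range (ℓ + 1)).filter (fun i => i = 0 ∨ lam i < lam (i - 1)), T ^ i * Q ^ lam i
          - T * Q * ∑ i ∈ (range ℓ).filter (fun i => lam (i + 1) < lam i),
              T ^ i * Q ^ (lam i - 1)) := by
  have hremovable : T * Q * ∑ i ∈ (range ℓ).filter (fun i => lam (i + 1) < lam i),
      T ^ i * Q ^ (lam i - 1)
        = ∑ i ∈ (range ℓ).filter (fun i => lam (i + 1) < lam i), T ^ (i + 1) * Q ^ lam i := by
    rw [mul_sum]
    refine sum_congr rfl fun i hi => ?_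
    obtain ⟨k, hk⟩ : ∃ k, lam i = k + 1 :=
      Nat.exists_eq_add_one_of_ne_zero (by simp only [mem_filter] at hi; omega)
    rw [hk, Nat.add_sub_cancel]
    ring
  have hsum : ∑ i ∈ range ℓ, (1 - T) * ((Q ^ lam i - 1) * T ^ i)
      = ∑ i ∈ range ℓ, (T ^ i * Q ^ lam i - T ^ (i + 1) * Q ^ lam i)
        - (1 - T) * ∑ i ∈ range ℓ, T ^ i := by
    rw [mul_sum, ← sum_sub_distrib]
    exact sum_congr rfl fun i _ => by ring
  rw [hremovable, sum_addable_sub_sum_removable hanti ℓ (fun i k => T ^ i * Q ^ k),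
    eq_inv_mul_iff_mul_eq₀ (sub_ne_zero.mpr hT.symm), mul_add,
    mul_inv_cancel₀ (sub_ne_zero.mpr hT.symm), mul_sum, hsum, sum_sub_distrib, sum_range_succ, hℓ]
  linear_combination -mul_neg_geom_sum T ℓ

theorem Eqt_addable_removable_general {F : Type*} [Field F] (q t : F)
    (m : ℤ) (htm : t ^ m ≠ 1)
    (ℓ : ℕ) (lam : ℕ → ℕ)
    (hanti : ∀ k, lam (k + 1) ≤ lam k)
    (hlen : ∀ k, ℓ ≤ k → lam k = 0) :
    Eqt q t m ℓ lam
      = (1 - t ^ m)⁻¹ *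
        ((∑ i ∈ (Finset.range (ℓ + 1)).filter (fun i => i = 0 ∨ lam i < lam (i - 1)),
            t ^ (m * (i : ℤ)) * q ^ (-(m * (lam i : ℤ))))
          - (t / q) ^ m *
            ∑ i ∈ (Finset.range ℓ).filter (fun i => lam (i + 1) < lam i),
              t ^ (m * (i : ℤ)) * q ^ (-(m * ((lam i : ℤ) - 1)))) := by
  have hpow (a : F) (n : ℤ) (k : ℕ) : a ^ (n * (k : ℤ)) = (a ^ n) ^ k := by
    rw [zpow_mul, zpow_natCast]
  have hneg (k : ℕ) : q ^ (-(m * (k : ℤ))) = (q ^ (-m)) ^ k := by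
    rw [← neg_mul, hpow]
  have hremovable : ∀ i ∈ (range ℓ).filter (fun i => lam (i + 1) < lam i),
      q ^ (-(m * ((lam i : ℤ) - 1))) = (q ^ (-m)) ^ (lam i - 1) := by
    intro i hi
    have : 1 ≤ lam i := by simp only [mem_filter] at hi; omega
    rw [← hneg, Nat.cast_sub this, Nat.cast_one]
  rw [Eqt, sum_congr rfl fun i hi => congrArg _ (hremovable i hi), div_eq_mul_inv, mul_zpow,
    inv_zpow']
  simp only [hpow, hneg]
  exact inv_one_sub_add_sum_eq_addable_sub_removable _ _ htm hanti ℓ (hlen ℓ le_rfl)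

/-- `E_{λ,m}` in terms of addable and removable cells: for a partition `λ` of length `ℓ`
(0-indexed), `E_{λ,m} = (1/(1-t^m)) · ( Σ_{□∈A(λ)} q^{m·c(□)} − (t/q)^m Σ_{■∈R(λ)} q^{m·c(■)} )`,
where `q^{m·c((i,j))} = t^{m(i-1)} q^{-m(j-1)}` (math 1-indexed cells), the addable cell in row
`i` is `(i, λ_i + 1)` and the removable cell is `(i, λ_i)`. -/
theorem Eqt_addable_removable {F : Type*} [Field F] (q t : F) (hq : q ≠ 0) (ht : t ≠ 0)
    (m : ℤ) (hm : m ≠ 0) (htm : t ^ m ≠ 1)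
    (ℓ : ℕ) (lam : ℕ → ℕ)
    (hanti : ∀ k, lam (k + 1) ≤ lam k)
    (hlen : ∀ k, ℓ ≤ k → lam k = 0)
    (hpos : ∀ k, k < ℓ → 0 < lam k) :
    Eqt q t m ℓ lam
      = (1 - t ^ m)⁻¹ *
        ((∑ i ∈ (Finset.range (ℓ + 1)).filter (fun i => i = 0 ∨ lam i < lam (i - 1)),
            t ^ (m * (i : ℤ)) * q ^ (-(m * (lam i : ℤ))))
          - (t / q) ^ m *
            ∑ i ∈ (Finset.range ℓ).filter (fun i => lam (i + 1) < lam i),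
              t ^ (m * (i : ℤ)) * q ^ (-(m * ((lam i : ℤ) - 1)))) :=
  Eqt_addable_removable_general q t m htm ℓ lam hanti hlen
end

section
/- For any two partitions λ, μ and nonzero integer m: −((1−t^m)/(1−q^m))·E_{λ,−m}·E_{μ,m} = t^m/((1−q^m)(1−t^m)) + Σ_{□∈μ} q^{m·a_λ(□)} t^{m(ℓ_μ(□)+1)} + Σ_{■∈λ} q^{−m(a_μ(■)+1)} t^{−m·ℓ_λ(■)}, where E_{ν,m} = 1/(1−t^m) + Σ_{j=1}^{ℓ(ν)} (q^{−m ν_j} − 1) t^{m(j−1)}, and for a cell □ = (i,j), a_ν(□) = ν_i − j and ℓ_ν(□) = ν'_j − i (arm and leg lengths relative to ν, possibly negative). -/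
open Finset

/-!
Write `Q = q^m`, `T = t^m`, and let `A = Σ_i (Q^{λ_i} - 1) T^{-i}` and `B = Σ_k (Q^{-μ_k} - 1) T^k`
be the row sums in `E_{λ,-m}` and `E_{μ,m}`. Clearing denominators, the identity says
`(1 - Q) (S_μ + S_λ) = T B - A - (1 - T) A B`, where `S_μ`, `S_λ` are the two arm-leg sums.
The legs are the only data not read off the rows: for a cell `(i, j)` of `ν` the rows strictly
between `i` and `ν'_{j+1}` are exactly the rows `k > i` containing column `j`, so
`X^{ν'_{j+1}} = X^{i+1} + (X - 1) Σ_{i < k, j < ν_k} X^k`. Substituting this turns each arm-leg sum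
into a diagonal sum over rows plus a sum over pairs of rows `i < k`, after which the arms only enter
through geometric sums in `Q`. The resulting identity between row data is proved by induction on
the number of rows.
-/

theorem sum_range_eq_of_le {M : Type*} [AddCommMonoid M] {L N : ℕ} (hLN : L ≤ N) {g : ℕ → M}
    (hg : ∀ k, L ≤ k → g k = 0) : ∑ k ∈ range L, g k = ∑ k ∈ range N, g k :=
  sum_subset (range_subset_range.mpr hLN) fun k _ hk => hg k (not_lt.mp (mem_range.not.mp hk))

theorem zpow_mul_natCast_sub {F : Type*} [Field F] {x : F} (hx : x ≠ 0) (m : ℤ) (a b : ℕ) :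
    x ^ (m * ((a : ℤ) - b)) = (x ^ m) ^ a * ((x ^ m)⁻¹) ^ b := by
  rw [mul_sub, zpow_sub₀ hx, zpow_mul, zpow_mul, zpow_natCast, zpow_natCast, div_eq_mul_inv,
    inv_pow]

section Conjugate

variable {L : ℕ} {f : ℕ → ℕ}

theorem conjPart_le (L : ℕ) (f : ℕ → ℕ) (c : ℕ) : conjPart L f c ≤ L :=
  (card_filter_le _ _).trans_eq (card_range L)

theorem lt_conjPart_iff (hf : Antitone f) (hL : ∀ k, L ≤ k → f k = 0) {i c : ℕ} (hc : 0 < c) :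
    i < conjPart L f c ↔ c ≤ f i := by
  constructor
  · intro hi
    by_contra h
    have hsub : (range L).filter (fun k => c ≤ f k) ⊆ range i := fun k hk =>
      mem_range.mpr (lt_of_not_ge fun hik => h ((mem_filter.mp hk).2.trans (hf hik)))
    exact absurd ((card_le_card hsub).trans_eq (card_range i)) (not_le.mpr hi)
  · intro hi
    have hsub : range (i + 1) ⊆ (range L).filter (fun k => c ≤ f k) := fun k hk => by
      have hk' : c ≤ f k := hi.trans (hf (Nat.lt_succ_iff.mp (mem_range.mp hk)))
      refine mem_filter.mpr ⟨mem_range.mpr (lt_of_not_ge fun hLk => ?_), hk'⟩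
      rw [hL k hLk] at hk'
      omega
    simpa [conjPart] using card_le_card hsub

theorem sum_cells_mul_pow_conjPart {F : Type*} [Field F] {N : ℕ} (hf : Antitone f)
    (hL : ∀ k, L ≤ k → f k = 0) (hN : L ≤ N) (u v : ℕ → F) (X : F) :
    ∑ i ∈ range N, ∑ j ∈ range (f i), u i * v j * X ^ conjPart L f (j + 1)
      = ∑ i ∈ range N, u i * X ^ (i + 1) * ∑ j ∈ range (f i), v j
        + (X - 1) * ∑ k ∈ range N, X ^ k * (∑ i ∈ range k, u i) * ∑ j ∈ range (f k), v j := by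
  have hleg : ∀ i, ∀ j ∈ range (f i), X ^ conjPart L f (j + 1)
      = X ^ (i + 1) + (X - 1) * ∑ k ∈ Ico (i + 1) (conjPart L f (j + 1)), X ^ k := by
    intro i j hj
    have hi : i + 1 ≤ conjPart L f (j + 1) :=
      (lt_conjPart_iff hf hL j.succ_pos).mpr (mem_range.mp hj)
    linear_combination -(geom_sum_Ico_mul X hi)
  have hswap : ∀ i, ∑ j ∈ range (f i), ∑ k ∈ Ico (i + 1) (conjPart L f (j + 1)), u i * v j * X ^ k
      = ∑ k ∈ Ico (i + 1) N, ∑ j ∈ range (f k), u i * v j * X ^ k := by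
    intro i
    refine sum_comm' fun j k => ?_
    simp only [mem_range, mem_Ico, lt_conjPart_iff hf hL j.succ_pos]
    constructor
    · rintro ⟨-, hik, hjk⟩
      have hkL := ((lt_conjPart_iff hf hL j.succ_pos).mpr hjk).trans_le (conjPart_le L f _)
      exact ⟨hjk, hik, hkL.trans_le hN⟩
    · rintro ⟨hjk, hik, -⟩
      exact ⟨hjk.trans_le (hf (by omega)), hik, hjk⟩
  have htriangle : ∑ i ∈ range N, ∑ k ∈ Ico (i + 1) N, ∑ j ∈ range (f k), u i * v j * X ^ k
      = ∑ k ∈ range N, ∑ i ∈ range k, ∑ j ∈ range (f k), u i * v j * X ^ k :=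
    sum_comm' fun i k => by simp only [mem_range, mem_Ico]; omega
  calc ∑ i ∈ range N, ∑ j ∈ range (f i), u i * v j * X ^ conjPart L f (j + 1)
      = ∑ i ∈ range N, (u i * X ^ (i + 1) * ∑ j ∈ range (f i), v j
          + (X - 1) * ∑ j ∈ range (f i), ∑ k ∈ Ico (i + 1) (conjPart L f (j + 1)),
              u i * v j * X ^ k) := by
        refine sum_congr rfl fun i _ => ?_
        rw [sum_congr rfl fun j hj => by rw [hleg i j hj], mul_sum, mul_sum, ← sum_add_distrib]
        refine sum_congr rfl fun j _ => ?_
        rw [← mul_sum]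
        ring
    _ = ∑ i ∈ range N, u i * X ^ (i + 1) * ∑ j ∈ range (f i), v j
        + (X - 1) * ∑ k ∈ range N, ∑ i ∈ range k, ∑ j ∈ range (f k), u i * v j * X ^ k := by
        rw [sum_add_distrib, ← mul_sum, sum_congr rfl fun i _ => hswap i, htriangle]
    _ = _ := by
        congr 2
        refine sum_congr rfl fun k _ => ?_
        rw [mul_assoc, sum_mul_sum, mul_sum]
        refine sum_congr rfl fun i _ => ?_
        rw [mul_sum]
        exact sum_congr rfl fun j _ => by ring

end Conjugate

/-- In the application `p i = Q^{λ_i}`, `r i = Q^{-μ_i}`, `T' = T⁻¹`, `c = 1 - Q`, and `g i`, `h i`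
are the geometric sums in `Q` over the cells of row `i` of `μ` and of `λ`. -/
theorem pairing_row_identity {F : Type*} [Field F] (c T T' : F) (hT : T * T' = 1)
    (p r g h : ℕ → F) (hg : ∀ i, c * g i = r i - 1) (hh : ∀ i, c * h i = 1 - p i) (N : ℕ) :
    c * (∑ i ∈ range N, p i * T' ^ i * T ^ (i + 1) * g i
        + (T - 1) * ∑ k ∈ range N, T ^ k * (∑ i ∈ range k, p i * T' ^ i) * g k
        + ∑ i ∈ range N, r i * T ^ (i + 1) * T' ^ (i + 1) * h i
        + (T' - 1) * ∑ k ∈ range N, T' ^ k * (∑ i ∈ range k, r i * T ^ (i + 1)) * h k)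
      = T * ∑ k ∈ range N, (r k - 1) * T ^ k - ∑ i ∈ range N, (p i - 1) * T' ^ i
        - (1 - T) * (∑ i ∈ range N, (p i - 1) * T' ^ i) * ∑ k ∈ range N, (r k - 1) * T ^ k := by
  induction N with
  | zero => simp
  | succ N ih =>
    simp only [sum_range_succ]
    set A := ∑ i ∈ range N, (p i - 1) * T' ^ i
    set B := ∑ i ∈ range N, (r i - 1) * T ^ i
    set E := ∑ i ∈ range N, T' ^ i
    set G := ∑ i ∈ range N, T ^ i
    have hP : ∑ i ∈ range N, p i * T' ^ i = A + E := by
      rw [← sum_add_distrib]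
      exact sum_congr rfl fun i _ => by ring
    have hR : ∑ i ∈ range N, r i * T ^ (i + 1) = T * (B + G) := by
      rw [← sum_add_distrib, mul_sum]
      exact sum_congr rfl fun i _ => by ring
    have hTN : T ^ N * T' ^ N = 1 := by rw [← mul_pow, hT, one_pow]
    have hT'T : (T' - 1) * T = 1 - T := by linear_combination hT
    have hE : (T - 1) * T ^ N * E = T ^ (N + 1) - T := by
      linear_combination (-T ^ (N + 1)) * geom_sum_mul T' N + T ^ N * E * hT - T * hTN
    have hG : (T' - 1) * T' ^ N * T * G = T' ^ N - 1 := by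
      linear_combination (-T' ^ N) * geom_sum_mul T N + T' ^ N * G * hT - hTN
    rw [hP, hR]
    linear_combination ih
      + (p N * T' ^ N * T ^ (N + 1) + (T - 1) * T ^ N * (A + E)) * hg N
      + (r N * T ^ (N + 1) * T' ^ (N + 1) + (T' - 1) * T' ^ N * (T * (B + G))) * hh N
      + (r N - 1) * hE + (1 - p N) * hG + T' ^ N * B * (1 - p N) * hT'T
      + (p N * T * (r N - 1) + r N * (1 - p N) * T * T' + (1 - T) * (1 - p N) * (1 - r N)) * hTN
      + r N * (1 - p N) * hT

theorem Eqt_eq_sum {F : Type*} [Field F] (q t : F) (m : ℤ) {L N : ℕ} {f : ℕ → ℕ}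
    (hL : ∀ k, L ≤ k → f k = 0) (hLN : L ≤ N) :
    Eqt q t m L f = (1 - t ^ m)⁻¹ + ∑ j ∈ range N, (((q ^ m)⁻¹) ^ f j - 1) * (t ^ m) ^ j := by
  rw [Eqt, sum_range_eq_of_le hLN fun k hk => by
    rw [hL k hk, Nat.cast_zero, mul_zero, neg_zero, zpow_zero, sub_self, zero_mul]]
  simp only [zpow_neg, zpow_mul, zpow_natCast, inv_pow]

theorem Eqt_neg_eq_sum {F : Type*} [Field F] (q t : F) (m : ℤ) {L N : ℕ} {f : ℕ → ℕ}
    (hL : ∀ k, L ≤ k → f k = 0) (hLN : L ≤ N) :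
    Eqt q t (-m) L f
      = (1 - (t ^ m)⁻¹)⁻¹ + ∑ j ∈ range N, ((q ^ m) ^ f j - 1) * ((t ^ m)⁻¹) ^ j := by
  simp only [Eqt_eq_sum q t (-m) hL hLN, zpow_neg, inv_inv]

theorem one_sub_mul_sum_inv_pow_succ {F : Type*} [Field F] {Q : F} (hQ : Q ≠ 0) (n : ℕ) :
    (1 - Q) * ∑ j ∈ range n, Q⁻¹ ^ (j + 1) = Q⁻¹ ^ n - 1 := by
  simp only [pow_succ, ← sum_mul]
  linear_combination (-(∑ j ∈ range n, Q⁻¹ ^ j)) * mul_inv_cancel₀ hQ + geom_sum_mul Q⁻¹ n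

theorem arm_leg_sums_eq {F : Type*} [Field F] {q t : F} (hq : q ≠ 0) (ht : t ≠ 0) (m : ℤ)
    {L M N : ℕ} {lam mu : ℕ → ℕ}
    (hal : Antitone lam) (hlenl : ∀ k, L ≤ k → lam k = 0)
    (ham : Antitone mu) (hlenm : ∀ k, M ≤ k → mu k = 0) (hLN : L ≤ N) (hMN : M ≤ N) :
    (1 - q ^ m) * ((∑ i ∈ range M, ∑ j ∈ range (mu i),
            q ^ (m * ((lam i : ℤ) - (j + 1)))
              * t ^ (m * (((conjPart M mu (j + 1) : ℤ) - (i + 1)) + 1)))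
        + ∑ i ∈ range L, ∑ j ∈ range (lam i),
            q ^ (-(m * (((mu i : ℤ) - (j + 1)) + 1)))
              * t ^ (-(m * ((conjPart L lam (j + 1) : ℤ) - (i + 1)))))
      = t ^ m * ∑ k ∈ range N, (((q ^ m)⁻¹) ^ mu k - 1) * (t ^ m) ^ k
        - ∑ i ∈ range N, ((q ^ m) ^ lam i - 1) * ((t ^ m)⁻¹) ^ i
        - (1 - t ^ m) * (∑ i ∈ range N, ((q ^ m) ^ lam i - 1) * ((t ^ m)⁻¹) ^ i)
          * ∑ k ∈ range N, (((q ^ m)⁻¹) ^ mu k - 1) * (t ^ m) ^ k := by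
  set Q := q ^ m
  set T := t ^ m
  have hSmu : ∑ i ∈ range M, ∑ j ∈ range (mu i), q ^ (m * ((lam i : ℤ) - (j + 1)))
        * t ^ (m * (((conjPart M mu (j + 1) : ℤ) - (i + 1)) + 1))
      = ∑ i ∈ range N, ∑ j ∈ range (mu i),
          Q ^ lam i * T⁻¹ ^ i * Q⁻¹ ^ (j + 1) * T ^ conjPart M mu (j + 1) := by
    rw [sum_range_eq_of_le hMN fun k hk => by rw [hlenm k hk, range_zero, sum_empty]]
    refine sum_congr rfl fun i _ => sum_congr rfl fun j _ => ?_
    rw [show m * ((lam i : ℤ) - (j + 1)) = m * ((lam i : ℤ) - ((j + 1 : ℕ) : ℤ)) by push_cast; ring,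
      show m * (((conjPart M mu (j + 1) : ℤ) - (i + 1)) + 1)
        = m * ((conjPart M mu (j + 1) : ℤ) - i) by ring,
      zpow_mul_natCast_sub hq, zpow_mul_natCast_sub ht]
    ring
  have hSlam : ∑ i ∈ range L, ∑ j ∈ range (lam i), q ^ (-(m * (((mu i : ℤ) - (j + 1)) + 1)))
        * t ^ (-(m * ((conjPart L lam (j + 1) : ℤ) - (i + 1))))
      = ∑ i ∈ range N, ∑ j ∈ range (lam i),
          Q⁻¹ ^ mu i * T ^ (i + 1) * Q ^ j * T⁻¹ ^ conjPart L lam (j + 1) := by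
    rw [sum_range_eq_of_le hLN fun k hk => by rw [hlenl k hk, range_zero, sum_empty]]
    refine sum_congr rfl fun i _ => sum_congr rfl fun j _ => ?_
    rw [show -(m * (((mu i : ℤ) - (j + 1)) + 1)) = m * ((j : ℤ) - mu i) by ring,
      show -(m * ((conjPart L lam (j + 1) : ℤ) - (i + 1)))
        = m * (((i + 1 : ℕ) : ℤ) - conjPart L lam (j + 1)) by push_cast; ring,
      zpow_mul_natCast_sub hq, zpow_mul_natCast_sub ht]
    ring
  rw [hSmu, hSlam, sum_cells_mul_pow_conjPart ham hlenm hMN,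
    sum_cells_mul_pow_conjPart hal hlenl hLN]
  linear_combination pairing_row_identity (1 - Q) T T⁻¹ (mul_inv_cancel₀ (zpow_ne_zero m ht))
    (fun i => Q ^ lam i) (fun i => Q⁻¹ ^ mu i)
    (fun i => ∑ j ∈ range (mu i), Q⁻¹ ^ (j + 1)) (fun i => ∑ j ∈ range (lam i), Q ^ j)
    (fun i => one_sub_mul_sum_inv_pow_succ (zpow_ne_zero m hq) (mu i))
    (fun i => by linear_combination -(geom_sum_mul Q (lam i))) N

theorem pairing_rational_identity {F : Type*} [Field F] {Q T A B S : F} (hT : T ≠ 0)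
    (hT1 : 1 - T ≠ 0) (hQ1 : 1 - Q ≠ 0) (h : (1 - Q) * S = T * B - A - (1 - T) * A * B) :
    -((1 - T) / (1 - Q)) * ((1 - T⁻¹)⁻¹ + A) * ((1 - T)⁻¹ + B) = T / ((1 - Q) * (1 - T)) + S := by
  have hT1' : T - 1 ≠ 0 := fun h0 => hT1 (by linear_combination -h0)
  rw [show (1 - T⁻¹)⁻¹ = T / (T - 1) by field_simp]
  field_simp
  linear_combination (T - 1) ^ 2 * h

theorem Eqt_pairing_general {F : Type*} [Field F] (q t : F) (hq : q ≠ 0) (ht : t ≠ 0)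
    (m : ℤ) (htm : t ^ m ≠ 1) (hqm : q ^ m ≠ 1)
    (L M : ℕ) (lam mu : ℕ → ℕ)
    (hal : ∀ k, lam (k + 1) ≤ lam k) (hlenl : ∀ k, L ≤ k → lam k = 0)
    (ham : ∀ k, mu (k + 1) ≤ mu k) (hlenm : ∀ k, M ≤ k → mu k = 0) :
    -((1 - t ^ m) / (1 - q ^ m)) * Eqt q t (-m) L lam * Eqt q t m M mu
      = t ^ m / ((1 - q ^ m) * (1 - t ^ m))
        + (∑ i ∈ Finset.range M, ∑ j ∈ Finset.range (mu i),
            q ^ (m * ((lam i : ℤ) - (j + 1)))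
              * t ^ (m * (((conjPart M mu (j + 1) : ℤ) - (i + 1)) + 1)))
        + ∑ i ∈ Finset.range L, ∑ j ∈ Finset.range (lam i),
            q ^ (-(m * (((mu i : ℤ) - (j + 1)) + 1)))
              * t ^ (-(m * ((conjPart L lam (j + 1) : ℤ) - (i + 1)))) := by
  have hT : t ^ m ≠ 0 := zpow_ne_zero m ht
  have hT1 : 1 - t ^ m ≠ 0 := sub_ne_zero.mpr htm.symm
  have hQ1 : 1 - q ^ m ≠ 0 := sub_ne_zero.mpr hqm.symm
  have hkey := arm_leg_sums_eq hq ht m (antitone_nat_of_succ_le hal) hlenl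
    (antitone_nat_of_succ_le ham) hlenm (le_max_left L M) (le_max_right L M)
  rw [Eqt_neg_eq_sum q t m hlenl (le_max_left L M), Eqt_eq_sum q t m hlenm (le_max_right L M),
    add_assoc]
  exact pairing_rational_identity hT hT1 hQ1 hkey

/-- For partitions `λ, μ` and `m ≠ 0`:
`−((1−t^m)/(1−q^m))·E_{λ,−m}·E_{μ,m}
  = t^m/((1−q^m)(1−t^m)) + Σ_{□∈μ} q^{m·a_λ(□)} t^{m(ℓ_μ(□)+1)}
    + Σ_{■∈λ} q^{−m(a_μ(■)+1)} t^{−m·ℓ_λ(■)}`,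
with arms and legs `a_ν((i,j)) = ν_i − j`, `ℓ_ν((i,j)) = ν'_j − i` (possibly negative). -/
theorem Eqt_pairing {F : Type*} [Field F] (q t : F) (hq : q ≠ 0) (ht : t ≠ 0)
    (m : ℤ) (hm : m ≠ 0) (htm : t ^ m ≠ 1) (hqm : q ^ m ≠ 1)
    (L M : ℕ) (lam mu : ℕ → ℕ)
    (hal : ∀ k, lam (k + 1) ≤ lam k) (hlenl : ∀ k, L ≤ k → lam k = 0)
    (ham : ∀ k, mu (k + 1) ≤ mu k) (hlenm : ∀ k, M ≤ k → mu k = 0) :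
    -((1 - t ^ m) / (1 - q ^ m)) * Eqt q t (-m) L lam * Eqt q t m M mu
      = t ^ m / ((1 - q ^ m) * (1 - t ^ m))
        + (∑ i ∈ Finset.range M, ∑ j ∈ Finset.range (mu i),
            q ^ (m * ((lam i : ℤ) - (j + 1)))
              * t ^ (m * (((conjPart M mu (j + 1) : ℤ) - (i + 1)) + 1)))
        + ∑ i ∈ Finset.range L, ∑ j ∈ Finset.range (lam i),
            q ^ (-(m * (((mu i : ℤ) - (j + 1)) + 1)))
              * t ^ (-(m * ((conjPart L lam (j + 1) : ℤ) - (i + 1)))) :=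
  Eqt_pairing_general q t hq ht m htm hqm L M lam mu hal hlenl ham hlenm
end

section
/- Let a_1,...,a_n, b_1,...,b_{n-1} be nonzero complex numbers with a_j pairwise distinct. Then the difference between the power-series expansion at s=0 and at s=∞ of Π_{j=1}^{n-1}(1 − s/b_j) / Π_{j=1}^{n}(1 − s/a_j) equals Σ_{k=1}^n δ(a_k/s) · Π_{j=1}^{n-1}(1 − a_k/b_j) / Π_{j≠k}(1 − a_k/a_j), as formal Laurent series, where δ(z) = Σ_{m∈ℤ} z^m. -/
/-!
Partial fractions. The numerator has smaller degree than the denominator and the poles are simple,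
so Lagrange interpolation at the nodes `a k` gives `f(s) = ∑ₖ cₖ / (1 - s / a k)`, and interpolation
at the nodes `(a k)⁻¹` gives `f(1/s) = ∑ₖ cₖ · s / (s - (a k)⁻¹)` with the same `cₖ`; the expansion
of `f` at `∞` is read off from the expansion of `f(1/s)` at `0` at index `-m`. A single term
`1 / (1 - s / a)` expands at `0` to `∑_{m ≥ 0} (s / a)^m` and at `∞` to `-∑_{m < 0} (s / a)^m`,
so the two expansions differ by the full series `δ(a / s)`.
-/

open Finset Polynomial

variable {K ι : Type*} [Field K]

theorem PowerSeries.one_sub_C_mul_X_mul_mk_pow (c : K) :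
    (1 - PowerSeries.C c * PowerSeries.X) * PowerSeries.mk (c ^ ·) = 1 := by
  have h := congrArg (PowerSeries.rescale c) (PowerSeries.mk_one_mul_one_sub_eq_one K)
  rw [map_mul, map_sub, map_one, PowerSeries.rescale_X, PowerSeries.rescale_mk, mul_comm] at h
  simpa using h

theorem Finset.sum_mul_prod_erase_div_prod {F : Type*} [Field F] [DecidableEq ι] (s : Finset ι)
    (c x : ι → F) (hx : ∀ i ∈ s, x i ≠ 0) :
    (∑ i ∈ s, c i * ∏ j ∈ s.erase i, x j) / ∏ i ∈ s, x i = ∑ i ∈ s, c i / x i := by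
  rw [sum_div]
  refine sum_congr rfl fun i hi => ?_
  rw [← mul_prod_erase s x hi, mul_div_mul_right _ _
    (prod_ne_zero_iff.2 fun j hj => hx j (mem_of_mem_erase hj))]

theorem Polynomial.degree_prod_le_card {s : Finset ι} {f : ι → K[X]}
    (hf : ∀ i ∈ s, (f i).degree ≤ 1) : (∏ i ∈ s, f i).degree ≤ #s := by
  refine (degree_prod_le _ _).trans ?_
  simpa using sum_le_card_nsmul s _ 1 hf

theorem Polynomial.one_sub_C_mul_X_ne_zero (c : K) : (1 - C c * X : K[X]) ≠ 0 := fun h => by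
  simpa using congrArg (eval 0) h

theorem Polynomial.eq_sum_C_mul_prod_erase [Fintype ι] [DecidableEq ι] {v : ι → K} {f : ι → K[X]}
    {P : K[X]} (c : ι → K) (hv : Function.Injective v) (hf_deg : ∀ i, (f i).degree ≤ 1)
    (hf_root : ∀ i, (f i).eval (v i) = 0) (hP : P.degree < Fintype.card ι)
    (hc : ∀ i, P.eval (v i) = c i * ∏ j ∈ univ.erase i, (f j).eval (v i)) :
    P = ∑ i, C (c i) * ∏ j ∈ univ.erase i, f j := by
  refine eq_of_degrees_lt_of_eval_index_eq univ hv.injOn (by simpa using hP) ?_ fun i _ => ?_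
  · refine (degree_sum_le _ _).trans_lt <|
      (Finset.sup_lt_iff (WithBot.bot_lt_coe _)).2 fun i _ => ?_
    calc (C (c i) * ∏ j ∈ univ.erase i, f j).degree
        ≤ (∏ j ∈ univ.erase i, f j).degree :=
          (degree_mul_le _ _).trans (add_le_of_nonpos_left degree_C_le)
      _ ≤ #(univ.erase i) := degree_prod_le_card fun j _ => hf_deg j
      _ < #univ := by exact_mod_cast card_erase_lt_of_mem (mem_univ i)
  · rw [hc, eval_finsetSum, sum_eq_single i]
    · simp [eval_prod]
    · intro j _ hji
      rw [eval_mul, eval_prod, prod_eq_zero (mem_erase.2 ⟨hji.symm, mem_univ i⟩) (hf_root i),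
        mul_zero]
    · simp

theorem RatFunc.div_prod_eq_sum_C_mul_inv [Fintype ι] [DecidableEq ι] {v : ι → K} {f : ι → K[X]}
    {P : K[X]} (c : ι → K) (hv : Function.Injective v) (hf_deg : ∀ i, (f i).degree ≤ 1)
    (hf_root : ∀ i, (f i).eval (v i) = 0) (hf : ∀ i, f i ≠ 0) (hP : P.degree < Fintype.card ι)
    (hc : ∀ i, P.eval (v i) = c i * ∏ j ∈ univ.erase i, (f j).eval (v i)) :
    algebraMap K[X] (RatFunc K) P / ∏ i, algebraMap K[X] (RatFunc K) (f i) =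
      ∑ i, C (c i) * (algebraMap K[X] (RatFunc K) (f i))⁻¹ := by
  rw [eq_sum_C_mul_prod_erase c hv hf_deg hf_root hP hc]
  simp only [map_sum, map_mul, map_prod, algebraMap_C]
  rw [sum_mul_prod_erase_div_prod _ _ _ fun i _ => algebraMap_ne_zero (hf i)]
  simp only [div_eq_mul_inv]

section DeltaCoeff

variable {κ : Type*} [Fintype ι] [DecidableEq ι] [Fintype κ]

def deltaCoeff (a : ι → K) (b : κ → K) (k : ι) : K :=
  (∏ j, (1 - a k / b j)) / ∏ j ∈ univ.erase k, (1 - a k / a j)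

theorem deltaCoeff_mul_prod {a : ι → K} (b : κ → K) (ha0 : ∀ i, a i ≠ 0)
    (ha : Function.Injective a) (k : ι) :
    deltaCoeff a b k * ∏ j ∈ univ.erase k, (1 - a k / a j) = ∏ j, (1 - a k / b j) := by
  refine div_mul_cancel₀ _ (prod_ne_zero_iff.2 fun j hj => ?_)
  rw [sub_ne_zero, ne_comm, ne_eq, div_eq_one_iff_eq (ha0 j)]
  exact fun h => (mem_erase.1 hj).1 (ha h).symm

theorem prod_one_sub_div_prod_one_sub_eq_sum {a : ι → K} (b : κ → K) (ha0 : ∀ i, a i ≠ 0)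
    (ha : Function.Injective a) (hcard : Fintype.card κ < Fintype.card ι) :
    (∏ j, (1 - RatFunc.C (b j)⁻¹ * RatFunc.X)) / ∏ i, (1 - RatFunc.C (a i)⁻¹ * RatFunc.X) =
      ∑ i, RatFunc.C (deltaCoeff a b i) * (1 - RatFunc.C (a i)⁻¹ * RatFunc.X)⁻¹ := by
  have heval : ∀ k (y : K), (1 - C y⁻¹ * X).eval (a k) = 1 - a k / y := fun k y => by
    simp [div_eq_inv_mul]
  have := RatFunc.div_prod_eq_sum_C_mul_inv (deltaCoeff a b) ha
    (f := fun i => 1 - C (a i)⁻¹ * X) (P := ∏ j, (1 - C (b j)⁻¹ * X))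
    (fun i => by compute_degree) (fun i => by simp [inv_mul_cancel₀ (ha0 i)])
    (fun i => one_sub_C_mul_X_ne_zero _)
    ((degree_prod_le_card fun j _ => by compute_degree).trans_lt (by simpa using hcard))
    (fun k => by simp only [eval_prod, heval, deltaCoeff_mul_prod b ha0 ha])
  simpa [map_prod] using this

theorem X_mul_prod_X_sub_div_prod_X_sub_eq_sum {a : ι → K} (b : κ → K) (ha0 : ∀ i, a i ≠ 0)
    (ha : Function.Injective a) (hcard : Fintype.card κ + 1 = Fintype.card ι) :
    (RatFunc.X * ∏ j, (RatFunc.X - RatFunc.C (b j)⁻¹)) / ∏ i, (RatFunc.X - RatFunc.C (a i)⁻¹) =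
      ∑ i, RatFunc.C (deltaCoeff a b i) * (RatFunc.X * (RatFunc.X - RatFunc.C (a i)⁻¹)⁻¹) := by
  have heval : ∀ k (y : K), (X - C y⁻¹).eval (a k)⁻¹ = (a k)⁻¹ * (1 - a k / y) := fun k y => by
    simp [mul_sub, inv_mul_cancel_left₀ (ha0 k), div_eq_mul_inv]
  have := RatFunc.div_prod_eq_sum_C_mul_inv (deltaCoeff a b) (inv_injective.comp ha)
    (f := fun i => X - C (a i)⁻¹) (P := ∏ j, (X - C (b j)⁻¹))
    (fun i => degree_X_sub_C_le _) (fun i => by simp) (fun i => X_sub_C_ne_zero _)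
    ((degree_prod_le_card fun j _ => degree_X_sub_C_le _).trans_lt (by simp; omega))
    (fun k => by
      simp only [Function.comp_apply, eval_prod, heval, prod_mul_distrib, prod_const, card_univ,
        card_erase_of_mem (mem_univ k), ← hcard, Nat.add_sub_cancel, ← deltaCoeff_mul_prod b ha0 ha]
      ring)
  simp only [map_prod, map_sub, RatFunc.algebraMap_X, RatFunc.algebraMap_C] at this
  rw [mul_div_assoc, this, mul_sum]
  exact sum_congr rfl fun i _ => mul_left_comm _ _ _

end DeltaCoeff

namespace RatFunc

theorem coe_C (c : K) : ((C c : RatFunc K) : LaurentSeries K) = HahnSeries.C c := by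
  rw [← algebraMap_C, ← coePolynomial, ← coe_coe, Polynomial.coe_C, PowerSeries.coe_C]

theorem coeff_coe_sum_C_mul (s : Finset ι) (c : ι → K) (h : ι → RatFunc K) (m : ℤ) :
    ((∑ i ∈ s, C (c i) * h i : RatFunc K) : LaurentSeries K).coeff m =
      ∑ i ∈ s, c i * (h i : LaurentSeries K).coeff m := by
  simp [HahnSeries.coeff_sum, coe_C]

theorem coeff_coe_inv_one_sub_C_mul_X (c : K) (m : ℤ) :
    (((1 - C c * X)⁻¹ : RatFunc K) : LaurentSeries K).coeff m = if 0 ≤ m then c ^ m else 0 := by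
  have hcoe : ((1 - C c * X : RatFunc K) : LaurentSeries K) =
      ((1 - PowerSeries.C c * PowerSeries.X : PowerSeries K) : LaurentSeries K) := by
    rw [show (1 - C c * X : RatFunc K) = ((1 - Polynomial.C c * Polynomial.X : K[X]) : RatFunc K) by
      simp [coePolynomial], ← coe_coe]
    simp
  have hinv : (((1 - C c * X)⁻¹ : RatFunc K) : LaurentSeries K) =
      ((PowerSeries.mk (c ^ ·) : PowerSeries K) : LaurentSeries K) := by
    rw [map_inv₀, hcoe]
    refine inv_eq_of_mul_eq_one_right ?_
    rw [← PowerSeries.coe_mul, PowerSeries.one_sub_C_mul_X_mul_mk_pow, PowerSeries.coe_one]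
  rw [hinv, PowerSeries.coeff_coe]
  split_ifs with h₁ h₂ h₂
  · omega
  · rfl
  · simp [← zpow_natCast, abs_of_nonneg h₂]
  · omega

theorem X_mul_inv_X_sub_C {u : K} (hu : u ≠ 0) :
    (X * (X - C u)⁻¹ : RatFunc K) = 1 - (1 - C u⁻¹ * X)⁻¹ := by
  have h₁ : (X - C u : RatFunc K) ≠ 0 := by
    simpa using algebraMap_ne_zero (K := K) (X_sub_C_ne_zero u)
  have h₂ : (1 - C u⁻¹ * X : RatFunc K) = -C u⁻¹ * (X - C u) := by
    rw [neg_mul, mul_sub, ← map_mul, inv_mul_cancel₀ hu, map_one]; ring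
  rw [h₂, mul_inv, inv_neg, ← map_inv₀, inv_inv]
  field_simp
  ring

theorem coeff_inv_one_sub_sub_coeff_neg_X_mul_inv {a : K} (ha : a ≠ 0) (m : ℤ) :
    (((1 - C a⁻¹ * X)⁻¹ : RatFunc K) : LaurentSeries K).coeff m -
      ((X * (X - C a⁻¹)⁻¹ : RatFunc K) : LaurentSeries K).coeff (-m) = a ^ (-m) := by
  rw [X_mul_inv_X_sub_C (inv_ne_zero ha), inv_inv, map_sub, map_one, HahnSeries.coeff_sub,
    HahnSeries.coeff_one, coeff_coe_inv_one_sub_C_mul_X, coeff_coe_inv_one_sub_C_mul_X, inv_zpow']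
  rcases lt_trichotomy m 0 with h | rfl | h
  · simp [h.not_ge, h.ne, h.le]
  · simp
  · simp [h.le, h.ne', h.not_ge]

end RatFunc

theorem rational_delta_expansion_proper_general (n : ℕ) (hn : 1 ≤ n)
    (a : Fin n → ℂ) (b : Fin (n - 1) → ℂ)
    (ha0 : ∀ k, a k ≠ 0) (hdist : Function.Injective a) :
    ∀ m : ℤ,
      ((((∏ j : Fin (n - 1), (1 - RatFunc.C (b j)⁻¹ * RatFunc.X)) /
            ∏ k : Fin n, (1 - RatFunc.C (a k)⁻¹ * RatFunc.X) : RatFunc ℂ) :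
          LaurentSeries ℂ).coeff m
        - (((RatFunc.X * ∏ j : Fin (n - 1), (RatFunc.X - RatFunc.C (b j)⁻¹)) /
              (∏ k : Fin n, (RatFunc.X - RatFunc.C (a k)⁻¹)) : RatFunc ℂ) :
            LaurentSeries ℂ).coeff (-m))
      = ∑ k : Fin n, (a k) ^ (-m) * (∏ j : Fin (n - 1), (1 - a k / b j))
          / ∏ j ∈ Finset.univ.erase k, (1 - a k / a j) := by
  intro m
  have hcard : Fintype.card (Fin (n - 1)) + 1 = Fintype.card (Fin n) := by simp; omega
  rw [prod_one_sub_div_prod_one_sub_eq_sum b ha0 hdist (by omega),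
    X_mul_prod_X_sub_div_prod_X_sub_eq_sum b ha0 hdist hcard, RatFunc.coeff_coe_sum_C_mul,
    RatFunc.coeff_coe_sum_C_mul, ← sum_sub_distrib]
  refine sum_congr rfl fun k _ => ?_
  rw [← mul_sub, RatFunc.coeff_inv_one_sub_sub_coeff_neg_X_mul_inv (ha0 k), deltaCoeff,
    mul_div_assoc, mul_comm]

/-- Rational delta-function identity for the proper rational function
`f(s) = Π_{j=1}^{n-1}(1 − s/b_j) / Π_{j=1}^{n}(1 − s/a_j)`: the difference between its
Laurent expansion at `s = 0` and its expansion at `s = ∞` (encoded via the expansion at `0`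
of `g(s) = f(1/s) = s·Π_{j=1}^{n-1}(s − 1/b_j)/Π_{j=1}^{n}(s − 1/a_j)`, whose coefficient at
`s^{-m}` is the coefficient at `s^m` of the expansion of `f` at `∞`) equals
`Σ_{k=1}^n δ(a_k/s)·Π_{j=1}^{n-1}(1 − a_k/b_j)/Π_{j≠k}(1 − a_k/a_j)`, where
`δ(z) = Σ_{m∈ℤ} z^m`, i.e. the coefficient at `s^m` of `δ(a_k/s)` is `a_k^{-m}`. -/
theorem rational_delta_expansion_proper (n : ℕ) (hn : 1 ≤ n)
    (a : Fin n → ℂ) (b : Fin (n - 1) → ℂ)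
    (ha0 : ∀ k, a k ≠ 0) (hb0 : ∀ j, b j ≠ 0) (hdist : Function.Injective a) :
    ∀ m : ℤ,
      ((((∏ j : Fin (n - 1), (1 - RatFunc.C (b j)⁻¹ * RatFunc.X)) /
            ∏ k : Fin n, (1 - RatFunc.C (a k)⁻¹ * RatFunc.X) : RatFunc ℂ) :
          LaurentSeries ℂ).coeff m
        - (((RatFunc.X * ∏ j : Fin (n - 1), (RatFunc.X - RatFunc.C (b j)⁻¹)) /
              (∏ k : Fin n, (RatFunc.X - RatFunc.C (a k)⁻¹)) : RatFunc ℂ) :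
            LaurentSeries ℂ).coeff (-m))
      = ∑ k : Fin n, (a k) ^ (-m) * (∏ j : Fin (n - 1), (1 - a k / b j))
          / ∏ j ∈ Finset.univ.erase k, (1 - a k / a j) :=
  rational_delta_expansion_proper_general n hn a b ha0 hdist
end

section
/- For partitions λ and μ and any integer ℓ ≥ max(ℓ(λ), ℓ(μ)), the Nekrasov factor N_{λμ}(x) := Π_{□∈λ} (1 − x q^{−a_μ(□)−1} t^{−ℓ_λ(□)}) · Π_{■∈μ} (1 − x q^{a_λ(■)} t^{ℓ_μ(■)+1}) equals Π_{1≤i≤j≤ℓ} (x q^{−μ_i+λ_{j+1}} t^{i−j}; q)_{λ_j − λ_{j+1}} · Π_{1≤r≤s≤ℓ} (x q^{λ_r−μ_s} t^{−r+s+1}; q)_{μ_s − μ_{s+1}}, where (y;q)_n = Π_{k=0}^{n−1}(1 − y q^k), λ_{ℓ+1} = μ_{ℓ+1} = 0, and for □ = (i,j), a_ν(□) = ν_i − j, ℓ_ν(□) = ν'_j − i. -/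
open Finset

/-- Finite `q`-Pochhammer `(y;q)_n = Π_{k=0}^{n-1}(1 − y q^k)`. -/
def pochq {F : Type*} [CommRing F] (q y : F) (n : ℕ) : F :=
  ∏ k ∈ Finset.range n, (1 - y * q ^ k)

/-! Cutting the columns of a partition `ν` at the row lengths `ν (m + 1) ≤ ν m` splits its
diagram into blocks: block `m` consists of the cells `(i, j)` with `i ≤ m` and
`ν (m + 1) ≤ j < ν m`, and on it the conjugate length `ν'_{j+1}` is constantly `m + 1`.
Regrouping both products of the Nekrasov factor along these blocks (`ν = λ` for the first,
`ν = μ` for the second) makes the factors of each row segment of a block a geometric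
progression in `q`, i.e. a `q`-Pochhammer symbol; for the second product it is read from
right to left. -/

theorem prod_Ico_antitone_eq_prod_prod_Ico {M : Type*} [CommMonoid M] {nu : ℕ → ℕ}
    (hnu : Antitone nu) (g : ℕ → M) {i n : ℕ} (hin : i ≤ n) :
    ∏ j ∈ Ico (nu n) (nu i), g j = ∏ m ∈ Ico i n, ∏ j ∈ Ico (nu (m + 1)) (nu m), g j := by
  induction n, hin using Nat.le_induction with
  | base => simp
  | succ n hin ih =>
    rw [prod_Ico_succ_top hin, ← ih, mul_comm,
      prod_Ico_consecutive g (hnu n.le_succ) (hnu hin)]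

section ConjugatePartition

variable {ℓ : ℕ} {nu : ℕ → ℕ}

theorem conjPart_succ_eq_of_mem_Ico (hnu : Antitone nu) (hlen : ∀ k, ℓ ≤ k → nu k = 0)
    {m j : ℕ} (hj : j ∈ Ico (nu (m + 1)) (nu m)) : conjPart ℓ nu (j + 1) = m + 1 := by
  rw [mem_Ico] at hj
  have hm : m < ℓ := by
    by_contra! h
    simp [hlen m h] at hj
  rw [conjPart, ← card_range (m + 1)]
  congr 1
  ext i
  simp only [mem_filter, mem_range]
  constructor
  · rintro ⟨-, hi⟩
    by_contra! h
    have := hnu h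
    omega
  · intro hi
    exact ⟨by omega, by have := hnu (Nat.le_of_lt_succ hi); omega⟩

theorem prod_cells_conjPart_eq_prod_blocks {M : Type*} [CommMonoid M] (hnu : Antitone nu)
    (hlen : ∀ k, ℓ ≤ k → nu k = 0) (f : ℕ → ℕ → ℕ → M) :
    ∏ i ∈ range ℓ, ∏ j ∈ range (nu i), f i j (conjPart ℓ nu (j + 1))
      = ∏ m ∈ range ℓ, ∏ i ∈ range (m + 1), ∏ j ∈ Ico (nu (m + 1)) (nu m), f i j (m + 1) := by
  calc ∏ i ∈ range ℓ, ∏ j ∈ range (nu i), f i j (conjPart ℓ nu (j + 1))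
      = ∏ i ∈ range ℓ, ∏ m ∈ Ico i ℓ, ∏ j ∈ Ico (nu (m + 1)) (nu m), f i j (m + 1) := by
        refine prod_congr rfl fun i hi => ?_
        rw [range_eq_Ico, ← hlen ℓ le_rfl,
          prod_Ico_antitone_eq_prod_prod_Ico hnu _ (mem_range.mp hi).le]
        refine prod_congr rfl fun m _ => prod_congr rfl fun j hj => ?_
        rw [conjPart_succ_eq_of_mem_Ico hnu hlen hj]
    _ = _ := prod_comm' fun i m => by simp only [mem_range, mem_Ico]; omega

end ConjugatePartition

section Pochhammer

variable {R : Type*} [CommRing R]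

theorem pochq_eq_prod_Ico (q y : R) {a b : ℕ} :
    pochq q y (b - a) = ∏ j ∈ Ico a b, (1 - y * q ^ (j - a)) := by
  simp [pochq, prod_Ico_eq_prod_range]

theorem pochq_eq_prod_Ico_reflect (q y : R) {a b : ℕ} :
    pochq q y (b - a) = ∏ j ∈ Ico a b, (1 - y * q ^ (b - 1 - j)) := by
  rw [pochq, ← prod_range_reflect, prod_Ico_eq_prod_range]
  refine prod_congr rfl fun k hk => ?_
  rw [mem_range] at hk
  congr 3
  omega

end Pochhammer

theorem nekrasov_factor_product_general {F : Type*} [Field F] (q t x : F) (hq : q ≠ 0)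
    (ℓ : ℕ) (lam mu : ℕ → ℕ)
    (hal : ∀ k, lam (k + 1) ≤ lam k) (hlenl : ∀ k, ℓ ≤ k → lam k = 0)
    (ham : ∀ k, mu (k + 1) ≤ mu k) (hlenm : ∀ k, ℓ ≤ k → mu k = 0) :
    (∏ i ∈ Finset.range ℓ, ∏ j ∈ Finset.range (lam i),
        (1 - x * q ^ (-((mu i : ℤ) - (j + 1)) - 1)
          * t ^ (-((conjPart ℓ lam (j + 1) : ℤ) - (i + 1)))))
      * ∏ i ∈ Finset.range ℓ, ∏ j ∈ Finset.range (mu i),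
          (1 - x * q ^ ((lam i : ℤ) - (j + 1))
            * t ^ (((conjPart ℓ mu (j + 1) : ℤ) - (i + 1)) + 1))
    = (∏ j ∈ Finset.range ℓ, ∏ i ∈ Finset.range (j + 1),
          pochq q (x * q ^ ((lam (j + 1) : ℤ) - (mu i : ℤ)) * t ^ ((i : ℤ) - (j : ℤ)))
            (lam j - lam (j + 1)))
      * ∏ s ∈ Finset.range ℓ, ∏ r ∈ Finset.range (s + 1),
          pochq q (x * q ^ ((lam r : ℤ) - (mu s : ℤ)) * t ^ ((s : ℤ) - (r : ℤ) + 1))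
            (mu s - mu (s + 1)) := by
  have zpow_mul_pow (c : ℤ) (n : ℕ) : q ^ c * q ^ n = q ^ (c + n) := by
    rw [zpow_add₀ hq, zpow_natCast]
  rw [prod_cells_conjPart_eq_prod_blocks (antitone_nat_of_succ_le hal) hlenl
      fun i j c => 1 - x * q ^ (-((mu i : ℤ) - (j + 1)) - 1) * t ^ (-((c : ℤ) - (i + 1))),
    prod_cells_conjPart_eq_prod_blocks (antitone_nat_of_succ_le ham) hlenm
      fun i j c => 1 - x * q ^ ((lam i : ℤ) - (j + 1)) * t ^ (((c : ℤ) - (i + 1)) + 1)]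
  congr 1
  · refine prod_congr rfl fun m _ => prod_congr rfl fun i _ => ?_
    rw [pochq_eq_prod_Ico]
    refine prod_congr rfl fun j hj => ?_
    rw [mem_Ico] at hj
    conv_rhs => rw [mul_right_comm, mul_assoc x, zpow_mul_pow]
    congr 4 <;> omega
  · refine prod_congr rfl fun s _ => prod_congr rfl fun r _ => ?_
    rw [pochq_eq_prod_Ico_reflect]
    refine prod_congr rfl fun j hj => ?_
    rw [mem_Ico] at hj
    conv_rhs => rw [mul_right_comm, mul_assoc x, zpow_mul_pow]
    congr 4 <;> omega

/-- Product formula for the (5d) Nekrasov factor: for partitions `λ, μ` and any `ℓ` at least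
their lengths,
`N_{λμ}(x) = Π_{□∈λ}(1 − x q^{−a_μ(□)−1} t^{−ℓ_λ(□)}) Π_{■∈μ}(1 − x q^{a_λ(■)} t^{ℓ_μ(■)+1})
 = Π_{1≤i≤j≤ℓ}(x q^{−μ_i+λ_{j+1}} t^{i−j};q)_{λ_j−λ_{j+1}}
   · Π_{1≤r≤s≤ℓ}(x q^{λ_r−μ_s} t^{−r+s+1};q)_{μ_s−μ_{s+1}}`,
with `a_ν((i,j)) = ν_i − j`, `ℓ_ν((i,j)) = ν'_j − i`, and `λ_{ℓ+1} = μ_{ℓ+1} = 0`. -/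
theorem nekrasov_factor_product {F : Type*} [Field F] (q t x : F) (hq : q ≠ 0) (ht : t ≠ 0)
    (ℓ : ℕ) (lam mu : ℕ → ℕ)
    (hal : ∀ k, lam (k + 1) ≤ lam k) (hlenl : ∀ k, ℓ ≤ k → lam k = 0)
    (ham : ∀ k, mu (k + 1) ≤ mu k) (hlenm : ∀ k, ℓ ≤ k → mu k = 0) :
    (∏ i ∈ Finset.range ℓ, ∏ j ∈ Finset.range (lam i),
        (1 - x * q ^ (-((mu i : ℤ) - (j + 1)) - 1)
          * t ^ (-((conjPart ℓ lam (j + 1) : ℤ) - (i + 1)))))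
      * ∏ i ∈ Finset.range ℓ, ∏ j ∈ Finset.range (mu i),
          (1 - x * q ^ ((lam i : ℤ) - (j + 1))
            * t ^ (((conjPart ℓ mu (j + 1) : ℤ) - (i + 1)) + 1))
    = (∏ j ∈ Finset.range ℓ, ∏ i ∈ Finset.range (j + 1),
          pochq q (x * q ^ ((lam (j + 1) : ℤ) - (mu i : ℤ)) * t ^ ((i : ℤ) - (j : ℤ)))
            (lam j - lam (j + 1)))
      * ∏ s ∈ Finset.range ℓ, ∏ r ∈ Finset.range (s + 1),
          pochq q (x * q ^ ((lam r : ℤ) - (mu s : ℤ)) * t ^ ((s : ℤ) - (r : ℤ) + 1))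
            (mu s - mu (s + 1)) :=
  nekrasov_factor_product_general q t x hq ℓ lam mu hal hlenl ham hlenm
end

section
/- Reflection symmetry of the 5d Nekrasov function (theta analogue): for any partitions λ, μ, N^θ_{λμ}(x; p) = (x·(t/q)^{1/2})^{|λ|+|μ|} · (f_λ(q,t)/f_μ(q,t)) · N^θ_{μλ}(q/(t x); p), where N^θ_{λμ}(x; p) = Π_{□∈λ} θ_p(x q^{−a_μ(□)−1} t^{−ℓ_λ(□)}) · Π_{■∈μ} θ_p(x q^{a_λ(■)} t^{ℓ_μ(■)+1}) and f_λ(q,t) = (−1)^{|λ|} q^{n(λ')+|λ|/2} t^{−n(λ)−|λ|/2}. -/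
open Finset Complex

/-- `(z;p)_∞ = Π_{n≥0}(1 − z p^n)`. -/
noncomputable def qPoch (z p : ℂ) : ℂ := ∏' n : ℕ, (1 - z * p ^ n)

/-- Jacobi's odd theta function `θ_p(z) = (z;p)_∞ (p/z;p)_∞`. -/
noncomputable def theta (p z : ℂ) : ℂ := qPoch z p * qPoch (p / z) p

/-- The theta-function Nekrasov factor
`N^θ_{λμ}(x;p) = Π_{□∈λ} θ_p(x q^{−a_μ(□)−1} t^{−ℓ_λ(□)}) Π_{■∈μ} θ_p(x q^{a_λ(■)} t^{ℓ_μ(■)+1})`,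
with `λ` of (at most) length `L` and `μ` of (at most) length `M`, 0-indexed rows. -/
noncomputable def NekTheta (p q t x : ℂ) (L M : ℕ) (lam mu : ℕ → ℕ) : ℂ :=
  (∏ i ∈ Finset.range L, ∏ j ∈ Finset.range (lam i),
      theta p (x * q ^ (-((mu i : ℤ) - (j + 1)) - 1)
        * t ^ (-((conjPart L lam (j + 1) : ℤ) - (i + 1)))))
    * ∏ i ∈ Finset.range M, ∏ j ∈ Finset.range (mu i),
        theta p (x * q ^ ((lam i : ℤ) - (j + 1))
          * t ^ (((conjPart M mu (j + 1) : ℤ) - (i + 1)) + 1))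

/-- `n(λ) = Σ_i (i−1) λ_i` (0-indexed: `Σ_{i₀} i₀ · λ_{i₀+1}`). -/
def nStat (L : ℕ) (lam : ℕ → ℕ) : ℕ := ∑ i ∈ Finset.range L, i * lam i

/-- `n(λ') = Σ_i λ_i (λ_i − 1)/2`. -/
def nStatConj (L : ℕ) (lam : ℕ → ℕ) : ℕ := ∑ i ∈ Finset.range L, Nat.choose (lam i) 2

/-- `|λ| = Σ_i λ_i`. -/
def wt (L : ℕ) (lam : ℕ → ℕ) : ℕ := ∑ i ∈ Finset.range L, lam i

open Filter in
lemma multipliable_aux (z p : ℂ) (hp : ‖p‖ < 1) :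
    Multipliable (fun n : ℕ => 1 - z * p ^ n) := by
  by_cases hzero : ∃ n : ℕ, 1 - z * p ^ n = 0
  · obtain ⟨n0, hn0⟩ := hzero
    refine ⟨0, ?_⟩
    rw [HasProd]
    refine Tendsto.congr' ?_ tendsto_const_nhds
    filter_upwards [Filter.eventually_atTop.mpr ⟨{n0}, fun s hs => hs⟩] with s hs
    exact (Finset.prod_eq_zero (hs (Finset.mem_singleton_self n0)) hn0).symm
  · push_neg at hzero
    refine Complex.multipliable_of_summable_log ?_
    have h0 : Tendsto (fun n : ℕ => z * p ^ n) atTop (nhds 0) := by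
      simpa using (tendsto_pow_atTop_nhds_zero_of_norm_lt_one
        (x := p) hp).const_mul z
    have hev : ∀ᶠ n : ℕ in atTop, ‖Complex.log (1 - z * p ^ n)‖ ≤ 3/2 * ‖z * p ^ n‖ := by
      filter_upwards [NormedAddCommGroup.tendsto_nhds_zero.mp h0 (1/2) (by norm_num)] with n hn
      have h1 : (1 : ℂ) - z * p ^ n = 1 + -(z * p ^ n) := by ring
      rw [h1]
      simpa using Complex.norm_log_one_add_half_le_self (z := -(z * p ^ n)) (by
        simpa using hn.le)
    refine Summable.of_norm_bounded_eventually_nat ?_ hev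
    simp only [norm_mul, norm_pow]
    exact ((summable_geometric_of_lt_one (norm_nonneg p)
      hp).mul_left _).mul_left _

lemma qPoch_split (z p : ℂ) (hp : ‖p‖ < 1) :
    qPoch z p = (1 - z) * qPoch (z * p) p := by
  have hm : Multipliable (fun n : ℕ => 1 - z * p ^ (n + 1)) := by
    have h := multipliable_aux (z * p) p hp
    have he : (fun n : ℕ => 1 - z * p * p ^ n) = fun n : ℕ => 1 - z * p ^ (n + 1) := by
      funext n; ring
    rwa [he] at h
  have h0 : qPoch z p = (1 - z * p ^ 0) * ∏' n : ℕ, (1 - z * p ^ (n + 1)) :=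
    tprod_eq_zero_mul' hm
  rw [h0, pow_zero, mul_one]
  congr 1
  rw [qPoch]
  exact tprod_congr fun n => by ring

lemma theta_inv (p z : ℂ) (hp : ‖p‖ < 1) (hz : z ≠ 0) :
    theta p z = (-z) * theta p z⁻¹ := by
  rw [theta, theta, qPoch_split z p hp, qPoch_split z⁻¹ p hp]
  have e1 : p / z⁻¹ = z * p := by field_simp
  have e2 : z⁻¹ * p = p / z := by rw [div_eq_mul_inv]; ring
  rw [e1, e2]
  have e3 : (1 - z⁻¹) = -z⁻¹ * (1 - z) := by field_simp; ring
  rw [e3]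
  field_simp


lemma mul_one_arg (q t x : ℂ) (hq : q ≠ 0) (ht : t ≠ 0) (hx : x ≠ 0) (A B : ℤ) :
    (x * q ^ (-A - 1) * t ^ (-B)) * (q / (t * x) * q ^ A * t ^ (B + 1)) = 1 := by
  have h1 : q ^ (-A - 1) * q ^ A = q⁻¹ := by
    rw [← zpow_add₀ hq]
    have h : -A - 1 + A = (-1 : ℤ) := by ring
    rw [h, zpow_neg_one]
  have h2 : t ^ (-B) * t ^ (B + 1) = t := by
    rw [← zpow_add₀ ht]
    have h : -B + (B + 1) = (1 : ℤ) := by ring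
    rw [h, zpow_one]
  calc (x * q ^ (-A - 1) * t ^ (-B)) * (q / (t * x) * q ^ A * t ^ (B + 1))
      = (q ^ (-A - 1) * q ^ A) * (t ^ (-B) * t ^ (B + 1)) * (x * (q / (t * x))) := by ring
    _ = 1 := by rw [h1, h2]; field_simp

lemma prod_zpow' {a : ℂ} (ha : a ≠ 0) {ι : Type*} (s : Finset ι) (f : ι → ℤ) :
    ∏ i ∈ s, a ^ f i = a ^ (∑ i ∈ s, f i) := by
  classical
  induction s using Finset.induction_on with
  | empty => simp
  | insert a s h ih => rw [Finset.prod_insert h, Finset.sum_insert h, ih, ← zpow_add₀ ha]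

lemma sum_range_id_int (n : ℕ) : ∑ j ∈ Finset.range n, (j : ℤ) = (n.choose 2 : ℤ) := by
  induction n with
  | zero => simp
  | succ m ih =>
    rw [Finset.sum_range_succ, ih]
    have h : (m + 1).choose 2 = m.choose 2 + m := by
      rw [Nat.choose_succ_succ, Nat.choose_one_right, Nat.add_comm]
    rw [h]; push_cast; ring

lemma sum_ite_min (a b : ℕ) : (∑ j ∈ Finset.range a, if j + 1 ≤ b then 1 else 0) = min a b := by
  induction a with
  | zero => simp
  | succ n ih =>
    rw [Finset.sum_range_succ, ih]
    split_ifs with h <;> omega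

lemma sum_min_eq (lam : ℕ → ℕ) (ha : Antitone lam) (L : ℕ) :
    ∑ i ∈ Finset.range L, ∑ k ∈ Finset.range L, min (lam i) (lam k)
      = ∑ m ∈ Finset.range L, (2 * m + 1) * lam m := by
  induction L with
  | zero => simp
  | succ n ih =>
    rw [Finset.sum_range_succ (f := fun m => (2 * m + 1) * lam m), ← ih]
    rw [Finset.sum_range_succ
      (f := fun i => ∑ k ∈ Finset.range (n + 1), min (lam i) (lam k))]
    have e1 : ∀ i ∈ Finset.range n, ∑ k ∈ Finset.range (n + 1), min (lam i) (lam k)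
        = (∑ k ∈ Finset.range n, min (lam i) (lam k)) + lam n := by
      intro i hi
      rw [Finset.sum_range_succ]
      congr 1
      exact min_eq_right (ha (Nat.le_of_lt (Finset.mem_range.mp hi)))
    have e2 : ∑ k ∈ Finset.range (n + 1), min (lam n) (lam k) = lam n * (n + 1) := by
      rw [Finset.sum_range_succ]
      have h : ∀ k ∈ Finset.range n, min (lam n) (lam k) = lam n := fun k hk =>
        min_eq_left (ha (Nat.le_of_lt (Finset.mem_range.mp hk)))
      rw [Finset.sum_congr rfl h, Finset.sum_const, Finset.card_range, smul_eq_mul, min_self]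
      ring
    rw [Finset.sum_congr rfl e1, Finset.sum_add_distrib, e2, Finset.sum_const,
      Finset.card_range, smul_eq_mul]
    ring

lemma conjPart_sum (L : ℕ) (lam : ℕ → ℕ) (ha : Antitone lam) :
    ∑ i ∈ Finset.range L, ∑ j ∈ Finset.range (lam i), conjPart L lam (j + 1)
      = 2 * nStat L lam + wt L lam := by
  have h1 : ∀ i, ∑ j ∈ Finset.range (lam i), conjPart L lam (j + 1)
      = ∑ k ∈ Finset.range L, min (lam i) (lam k) := by
    intro i
    have hc : ∀ j : ℕ, conjPart L lam (j + 1)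
        = ∑ k ∈ Finset.range L, if j + 1 ≤ lam k then 1 else 0 := by
      intro j
      rw [conjPart, Finset.card_filter]
    calc ∑ j ∈ Finset.range (lam i), conjPart L lam (j + 1)
        = ∑ j ∈ Finset.range (lam i), ∑ k ∈ Finset.range L,
            (if j + 1 ≤ lam k then 1 else 0) := Finset.sum_congr rfl fun j _ => hc j
      _ = ∑ k ∈ Finset.range L, ∑ j ∈ Finset.range (lam i),
            (if j + 1 ≤ lam k then 1 else 0) := Finset.sum_comm
      _ = ∑ k ∈ Finset.range L, min (lam i) (lam k) :=
            Finset.sum_congr rfl fun k _ => sum_ite_min (lam i) (lam k)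
  rw [Finset.sum_congr rfl fun i _ => h1 i, sum_min_eq lam ha L, nStat, wt,
    Finset.mul_sum, ← Finset.sum_add_distrib]
  exact Finset.sum_congr rfl fun m _ => by ring

lemma sum_mul_succ (L : ℕ) (lam : ℕ → ℕ) :
    ∑ i ∈ Finset.range L, lam i * (i + 1) = nStat L lam + wt L lam := by
  rw [nStat, wt, ← Finset.sum_add_distrib]
  exact Finset.sum_congr rfl fun i _ => by ring

lemma q_exp_L (L : ℕ) (lam mu : ℕ → ℕ) :
    ∑ i ∈ Finset.range L, ∑ j ∈ Finset.range (lam i), (-((mu i : ℤ) - ((j : ℤ) + 1)) - 1)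
      = (nStatConj L lam : ℤ) - ∑ i ∈ Finset.range L, (lam i : ℤ) * mu i := by
  rw [nStatConj]
  push_cast
  rw [← Finset.sum_sub_distrib]
  refine Finset.sum_congr rfl fun i _ => ?_
  have h : ∀ j ∈ Finset.range (lam i), (-((mu i : ℤ) - ((j : ℤ) + 1)) - 1) = (j : ℤ) - mu i :=
    fun j _ => by ring
  rw [Finset.sum_congr rfl h, Finset.sum_sub_distrib, sum_range_id_int,
    Finset.sum_const, Finset.card_range, nsmul_eq_mul]

lemma q_exp_M (M : ℕ) (lam mu : ℕ → ℕ) :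
    ∑ i ∈ Finset.range M, ∑ j ∈ Finset.range (mu i), ((lam i : ℤ) - ((j : ℤ) + 1))
      = (∑ i ∈ Finset.range M, (lam i : ℤ) * mu i) - (nStatConj M mu : ℤ) - (wt M mu : ℤ) := by
  rw [nStatConj, wt]
  push_cast
  rw [sub_sub, ← Finset.sum_add_distrib, ← Finset.sum_sub_distrib]
  refine Finset.sum_congr rfl fun i _ => ?_
  have h : ∀ j ∈ Finset.range (mu i), ((lam i : ℤ) - ((j : ℤ) + 1))
      = ((lam i : ℤ) - 1) - (j : ℤ) := fun j _ => by ring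
  rw [Finset.sum_congr rfl h, Finset.sum_sub_distrib, sum_range_id_int,
    Finset.sum_const, Finset.card_range, nsmul_eq_mul]
  ring

lemma cross_eq (L M : ℕ) (lam mu : ℕ → ℕ)
    (hlenl : ∀ k, L ≤ k → lam k = 0) (hlenm : ∀ k, M ≤ k → mu k = 0) :
    ∑ i ∈ Finset.range L, (lam i : ℤ) * mu i = ∑ i ∈ Finset.range M, (lam i : ℤ) * mu i := by
  have h1 : ∑ i ∈ Finset.range L, (lam i : ℤ) * mu i
      = ∑ i ∈ Finset.range (max L M), (lam i : ℤ) * mu i := by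
    refine Finset.sum_subset (Finset.range_subset_range.mpr (le_max_left L M)) ?_
    intro i _ hni
    rw [hlenl i (by simpa using hni)]
    simp
  have h2 : ∑ i ∈ Finset.range M, (lam i : ℤ) * mu i
      = ∑ i ∈ Finset.range (max L M), (lam i : ℤ) * mu i := by
    refine Finset.sum_subset (Finset.range_subset_range.mpr (le_max_right L M)) ?_
    intro i _ hni
    rw [hlenm i (by simpa using hni)]
    simp
  rw [h1, h2]

lemma t_exp_L (L : ℕ) (lam : ℕ → ℕ) (ha : Antitone lam) :
    ∑ i ∈ Finset.range L, ∑ j ∈ Finset.range (lam i),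
        (-((conjPart L lam (j + 1) : ℤ) - ((i : ℤ) + 1)))
      = -(nStat L lam : ℤ) := by
  have e : ∀ i ∈ Finset.range L, ∑ j ∈ Finset.range (lam i),
      (-((conjPart L lam (j + 1) : ℤ) - ((i : ℤ) + 1)))
        = (lam i : ℤ) * ((i : ℤ) + 1)
          - ∑ j ∈ Finset.range (lam i), (conjPart L lam (j + 1) : ℤ) := by
    intro i _
    have h : ∀ j ∈ Finset.range (lam i),
        (-((conjPart L lam (j + 1) : ℤ) - ((i : ℤ) + 1)))
          = ((i : ℤ) + 1) - (conjPart L lam (j + 1) : ℤ) := fun j _ => by ring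
    rw [Finset.sum_congr rfl h, Finset.sum_sub_distrib, Finset.sum_const,
      Finset.card_range, nsmul_eq_mul]
  rw [Finset.sum_congr rfl e, Finset.sum_sub_distrib]
  have h1 : ∑ i ∈ Finset.range L, (lam i : ℤ) * ((i : ℤ) + 1)
      = (nStat L lam : ℤ) + (wt L lam : ℤ) := by
    rw [nStat, wt]
    push_cast
    rw [← Finset.sum_add_distrib]
    exact Finset.sum_congr rfl fun i _ => by ring
  have h2 : ∑ i ∈ Finset.range L, ∑ j ∈ Finset.range (lam i), (conjPart L lam (j + 1) : ℤ)
      = 2 * (nStat L lam : ℤ) + (wt L lam : ℤ) := by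
    have := conjPart_sum L lam ha
    have hc : ((∑ i ∈ Finset.range L, ∑ j ∈ Finset.range (lam i),
        conjPart L lam (j + 1) : ℕ) : ℤ) = ((2 * nStat L lam + wt L lam : ℕ) : ℤ) := by
      exact congrArg (fun n : ℕ => (n : ℤ)) this
    push_cast at hc
    exact hc
  rw [h1, h2]
  ring

lemma t_exp_M (M : ℕ) (mu : ℕ → ℕ) (ha : Antitone mu) :
    ∑ i ∈ Finset.range M, ∑ j ∈ Finset.range (mu i),
        (((conjPart M mu (j + 1) : ℤ) - ((i : ℤ) + 1)) + 1)
      = (nStat M mu : ℤ) + (wt M mu : ℤ) := by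
  have e : ∀ i ∈ Finset.range M, ∑ j ∈ Finset.range (mu i),
      (((conjPart M mu (j + 1) : ℤ) - ((i : ℤ) + 1)) + 1)
        = (∑ j ∈ Finset.range (mu i), (conjPart M mu (j + 1) : ℤ))
          - (mu i : ℤ) * (i : ℤ) := by
    intro i _
    have h : ∀ j ∈ Finset.range (mu i),
        (((conjPart M mu (j + 1) : ℤ) - ((i : ℤ) + 1)) + 1)
          = (conjPart M mu (j + 1) : ℤ) - (i : ℤ) := fun j _ => by ring
    rw [Finset.sum_congr rfl h, Finset.sum_sub_distrib, Finset.sum_const,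
      Finset.card_range, nsmul_eq_mul]
  rw [Finset.sum_congr rfl e, Finset.sum_sub_distrib]
  have h2 : ∑ i ∈ Finset.range M, ∑ j ∈ Finset.range (mu i), (conjPart M mu (j + 1) : ℤ)
      = 2 * (nStat M mu : ℤ) + (wt M mu : ℤ) := by
    have := conjPart_sum M mu ha
    have hc : ((∑ i ∈ Finset.range M, ∑ j ∈ Finset.range (mu i),
        conjPart M mu (j + 1) : ℕ) : ℤ) = ((2 * nStat M mu + wt M mu : ℕ) : ℤ) := by
      exact congrArg (fun n : ℕ => (n : ℤ)) this
    push_cast at hc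
    exact hc
  have h1 : ∑ i ∈ Finset.range M, (mu i : ℤ) * (i : ℤ) = (nStat M mu : ℤ) := by
    rw [nStat]
    push_cast
    exact Finset.sum_congr rfl fun i _ => by ring
  rw [h1, h2]
  ring


lemma double_prod_zpow {a : ℂ} (ha : a ≠ 0) (K : ℕ) (r : ℕ → ℕ) (e : ℕ → ℕ → ℤ) :
    ∏ i ∈ Finset.range K, ∏ j ∈ Finset.range (r i), a ^ e i j
      = a ^ (∑ i ∈ Finset.range K, ∑ j ∈ Finset.range (r i), e i j) := by
  rw [← prod_zpow' ha]
  exact Finset.prod_congr rfl fun i _ => prod_zpow' ha _ _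

lemma nek_half1 (p q t x : ℂ) (hp : ‖p‖ < 1) (hq : q ≠ 0) (ht : t ≠ 0) (hx : x ≠ 0)
    (K : ℕ) (r : ℕ → ℕ) (A B : ℕ → ℕ → ℤ) :
    (∏ i ∈ Finset.range K, ∏ j ∈ Finset.range (r i),
        theta p (x * q ^ (-(A i j) - 1) * t ^ (-(B i j))))
      = (-x) ^ (∑ i ∈ Finset.range K, r i)
        * q ^ (∑ i ∈ Finset.range K, ∑ j ∈ Finset.range (r i), (-(A i j) - 1))
        * t ^ (∑ i ∈ Finset.range K, ∑ j ∈ Finset.range (r i), (-(B i j)))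
        * ∏ i ∈ Finset.range K, ∏ j ∈ Finset.range (r i),
            theta p (q / (t * x) * q ^ (A i j) * t ^ (B i j + 1)) := by
  have hfac : ∀ i j : ℕ,
      theta p (x * q ^ (-(A i j) - 1) * t ^ (-(B i j)))
        = ((-x) * q ^ (-(A i j) - 1) * t ^ (-(B i j)))
          * theta p (q / (t * x) * q ^ (A i j) * t ^ (B i j + 1)) := by
    intro i j
    have hz : x * q ^ (-(A i j) - 1) * t ^ (-(B i j)) ≠ 0 :=
      mul_ne_zero (mul_ne_zero hx (zpow_ne_zero _ hq)) (zpow_ne_zero _ ht)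
    rw [theta_inv p _ hp hz,
      inv_eq_of_mul_eq_one_right (mul_one_arg q t x hq ht hx (A i j) (B i j))]
    ring
  rw [Finset.prod_congr rfl fun i _ => Finset.prod_congr rfl fun j _ => hfac i j]
  simp only [Finset.prod_mul_distrib, Finset.prod_const, Finset.card_range]
  rw [Finset.prod_pow_eq_pow_sum, double_prod_zpow hq, double_prod_zpow ht]

lemma nek_half2 (p q t x : ℂ) (hp : ‖p‖ < 1) (hq : q ≠ 0) (ht : t ≠ 0) (hx : x ≠ 0)
    (K : ℕ) (r : ℕ → ℕ) (A B : ℕ → ℕ → ℤ) :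
    (∏ i ∈ Finset.range K, ∏ j ∈ Finset.range (r i),
        theta p (x * q ^ (A i j) * t ^ (B i j + 1)))
      = (-x) ^ (∑ i ∈ Finset.range K, r i)
        * q ^ (∑ i ∈ Finset.range K, ∑ j ∈ Finset.range (r i), A i j)
        * t ^ (∑ i ∈ Finset.range K, ∑ j ∈ Finset.range (r i), (B i j + 1))
        * ∏ i ∈ Finset.range K, ∏ j ∈ Finset.range (r i),
            theta p (q / (t * x) * q ^ (-(A i j) - 1) * t ^ (-(B i j))) := by
  have hx' : q / (t * x) ≠ 0 := div_ne_zero hq (mul_ne_zero ht hx)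
  have key : q / (t * (q / (t * x))) = x := by field_simp
  have hfac : ∀ i j : ℕ,
      theta p (x * q ^ (A i j) * t ^ (B i j + 1))
        = ((-x) * q ^ (A i j) * t ^ (B i j + 1))
          * theta p (q / (t * x) * q ^ (-(A i j) - 1) * t ^ (-(B i j))) := by
    intro i j
    have hz : x * q ^ (A i j) * t ^ (B i j + 1) ≠ 0 :=
      mul_ne_zero (mul_ne_zero hx (zpow_ne_zero _ hq)) (zpow_ne_zero _ ht)
    have h1 := mul_one_arg q t (q / (t * x)) hq ht hx' (A i j) (B i j)
    rw [key] at h1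
    have h2 : (x * q ^ (A i j) * t ^ (B i j + 1))
        * (q / (t * x) * q ^ (-(A i j) - 1) * t ^ (-(B i j))) = 1 := by
      rw [mul_comm]; exact h1
    rw [theta_inv p _ hp hz, inv_eq_of_mul_eq_one_right h2]
    ring
  rw [Finset.prod_congr rfl fun i _ => Finset.prod_congr rfl fun j _ => hfac i j]
  simp only [Finset.prod_mul_distrib, Finset.prod_const, Finset.card_range]
  rw [Finset.prod_pow_eq_pow_sum, double_prod_zpow hq, double_prod_zpow ht]

lemma scalar_id (q t x sq sT : ℂ) (hq : q ≠ 0) (ht : t ≠ 0) (hx : x ≠ 0)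
    (hsq : sq ^ 2 = q) (hsT : sT ^ 2 = t) (wL wM ncL ncM nL nM : ℕ) :
    (-x) ^ (wL + wM) * q ^ ((ncL : ℤ) - (ncM : ℤ) - (wM : ℤ))
        * t ^ (-(nL : ℤ) + ((nM : ℤ) + (wM : ℤ)))
      = (x * (sT / sq)) ^ (wL + wM)
        * (((-1 : ℂ) ^ wL * q ^ ncL * sq ^ wL * t ^ (-(nL : ℤ)) * sT ^ (-(wL : ℤ)))
          / ((-1 : ℂ) ^ wM * q ^ ncM * sq ^ wM * t ^ (-(nM : ℤ)) * sT ^ (-(wM : ℤ)))) := by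
  have hsq0 : sq ≠ 0 := by intro h; apply hq; rw [← hsq, h]; ring
  have hsT0 : sT ≠ 0 := by intro h; apply ht; rw [← hsT, h]; ring
  subst hsq hsT
  simp only [zpow_sub₀ (pow_ne_zero 2 hsq0), zpow_add₀ (pow_ne_zero 2 hsT0), zpow_neg,
    zpow_natCast]
  field_simp
  rw [div_pow, neg_pow, mul_pow, mul_div_assoc', div_mul_eq_mul_div, div_mul_eq_mul_div,
    div_mul_eq_mul_div, eq_div_iff (pow_ne_zero _ hsq0)]
  have hsign : ((-1 : ℂ)) ^ wM * (-1) ^ wM = 1 := by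
    rw [← mul_pow]; norm_num
  linear_combination (x ^ (wL + wM) * (-1) ^ wL * sT ^ (wL + 2 * wM) * sq ^ (wL + 2 * wM)) * hsign

lemma q_exp_total (L M : ℕ) (lam mu : ℕ → ℕ)
    (hlenl : ∀ k, L ≤ k → lam k = 0) (hlenm : ∀ k, M ≤ k → mu k = 0) :
    (∑ i ∈ Finset.range L, ∑ j ∈ Finset.range (lam i), (-((mu i : ℤ) - ((j : ℤ) + 1)) - 1))
      + (∑ i ∈ Finset.range M, ∑ j ∈ Finset.range (mu i), ((lam i : ℤ) - ((j : ℤ) + 1)))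
    = (nStatConj L lam : ℤ) - (nStatConj M mu : ℤ) - (wt M mu : ℤ) := by
  rw [q_exp_L L lam mu, q_exp_M M lam mu, cross_eq L M lam mu hlenl hlenm]
  ring

lemma t_exp_total (L M : ℕ) (lam mu : ℕ → ℕ) (hal : Antitone lam) (ham : Antitone mu) :
    (∑ i ∈ Finset.range L, ∑ j ∈ Finset.range (lam i),
        (-((conjPart L lam (j + 1) : ℤ) - ((i : ℤ) + 1))))
      + (∑ i ∈ Finset.range M, ∑ j ∈ Finset.range (mu i),
          (((conjPart M mu (j + 1) : ℤ) - ((i : ℤ) + 1)) + 1))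
    = -(nStat L lam : ℤ) + ((nStat M mu : ℤ) + (wt M mu : ℤ)) := by
  rw [t_exp_L L lam hal, t_exp_M M mu ham]


/-- Reflection symmetry of the theta Nekrasov function:
`N^θ_{λμ}(x;p) = (x (t/q)^{1/2})^{|λ|+|μ|} (f_λ/f_μ) N^θ_{μλ}(q/(tx);p)`,
where `f_λ(q,t) = (−1)^{|λ|} q^{n(λ')+|λ|/2} t^{−n(λ)−|λ|/2}` is the framing factor, and
`sq, sT` are fixed square roots of `q, t`. -/
theorem nekTheta_reflection (p q t x sq sT : ℂ) (hp : ‖p‖ < 1) (hp0 : p ≠ 0)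
    (hq : q ≠ 0) (ht : t ≠ 0) (hx : x ≠ 0) (hsq : sq ^ 2 = q) (hsT : sT ^ 2 = t)
    (L M : ℕ) (lam mu : ℕ → ℕ)
    (hal : ∀ k, lam (k + 1) ≤ lam k) (hlenl : ∀ k, L ≤ k → lam k = 0)
    (ham : ∀ k, mu (k + 1) ≤ mu k) (hlenm : ∀ k, M ≤ k → mu k = 0) :
    NekTheta p q t x L M lam mu
      = (x * (sT / sq)) ^ (wt L lam + wt M mu)
        * (((-1 : ℂ) ^ (wt L lam) * q ^ (nStatConj L lam) * sq ^ (wt L lam)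
              * t ^ (-(nStat L lam : ℤ)) * sT ^ (-(wt L lam : ℤ)))
            / ((-1 : ℂ) ^ (wt M mu) * q ^ (nStatConj M mu) * sq ^ (wt M mu)
              * t ^ (-(nStat M mu : ℤ)) * sT ^ (-(wt M mu : ℤ))))
        * NekTheta p q t (q / (t * x)) M L mu lam := by
  have hAntL : Antitone lam := antitone_nat_of_succ_le hal
  have hAntM : Antitone mu := antitone_nat_of_succ_le ham
  have h1 : (∏ i ∈ Finset.range L, ∏ j ∈ Finset.range (lam i),
      theta p (x * q ^ (-((mu i : ℤ) - (j + 1)) - 1)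
        * t ^ (-((conjPart L lam (j + 1) : ℤ) - (i + 1)))))
      = (-x) ^ (∑ i ∈ Finset.range L, lam i)
        * q ^ (∑ i ∈ Finset.range L, ∑ j ∈ Finset.range (lam i),
            (-((mu i : ℤ) - ((j : ℤ) + 1)) - 1))
        * t ^ (∑ i ∈ Finset.range L, ∑ j ∈ Finset.range (lam i),
            (-((conjPart L lam (j + 1) : ℤ) - ((i : ℤ) + 1))))
        * ∏ i ∈ Finset.range L, ∏ j ∈ Finset.range (lam i),
            theta p (q / (t * x) * q ^ ((mu i : ℤ) - (j + 1))
              * t ^ (((conjPart L lam (j + 1) : ℤ) - (i + 1)) + 1)) :=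
    nek_half1 p q t x hp hq ht hx L lam (fun i j => (mu i : ℤ) - ((j : ℤ) + 1))
      (fun i j => (conjPart L lam (j + 1) : ℤ) - ((i : ℤ) + 1))
  have h2 : (∏ i ∈ Finset.range M, ∏ j ∈ Finset.range (mu i),
      theta p (x * q ^ ((lam i : ℤ) - (j + 1))
        * t ^ (((conjPart M mu (j + 1) : ℤ) - (i + 1)) + 1)))
      = (-x) ^ (∑ i ∈ Finset.range M, mu i)
        * q ^ (∑ i ∈ Finset.range M, ∑ j ∈ Finset.range (mu i),
            ((lam i : ℤ) - ((j : ℤ) + 1)))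
        * t ^ (∑ i ∈ Finset.range M, ∑ j ∈ Finset.range (mu i),
            (((conjPart M mu (j + 1) : ℤ) - ((i : ℤ) + 1)) + 1))
        * ∏ i ∈ Finset.range M, ∏ j ∈ Finset.range (mu i),
            theta p (q / (t * x) * q ^ (-((lam i : ℤ) - (j + 1)) - 1)
              * t ^ (-((conjPart M mu (j + 1) : ℤ) - (i + 1)))) :=
    nek_half2 p q t x hp hq ht hx M mu (fun i j => (lam i : ℤ) - ((j : ℤ) + 1))
      (fun i j => (conjPart M mu (j + 1) : ℤ) - ((i : ℤ) + 1))
  rw [NekTheta, NekTheta, h1, h2]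
  rw [show (∑ i ∈ Finset.range L, lam i) = wt L lam from rfl,
    show (∑ i ∈ Finset.range M, mu i) = wt M mu from rfl]
  have rearr : ∀ (a b c d e f g h : ℂ),
      (a * b * c * d) * (e * f * g * h) = ((a * e) * (b * f) * (c * g)) * (h * d) := by
    intros; ring
  rw [rearr, ← pow_add, ← zpow_add₀ hq, ← zpow_add₀ ht,
    q_exp_total L M lam mu hlenl hlenm, t_exp_total L M lam mu hAntL hAntM,
    scalar_id q t x sq sT hq ht hx hsq hsT (wt L lam) (wt M mu)
      (nStatConj L lam) (nStatConj M mu) (nStat L lam) (nStat M mu)]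
end
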